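/- Let s ≥ k ≥ 1 be integers and let G be a finite (s,k)-unbreakable graph with |V(G)| ≥ (2s)^{k+2}. Then every tree decomposition of G in which every adhesion has size < k has exactly one bag of size ≥ 2s. -/

import Mathlib

open Finset SimpleGraph

variable {V : Type} [Fintype V] [DecidableEq V]

/-- `(A, B)` is a vertex cut of `G`. -/
def IsVertexCut (G : SimpleGraph V) (A B : Finset V) : Prop :=
  A ∪ B = Finset.univ ∧
  ∀ u v : V, u ∈ A → u ∉ B → v ∈ B → v ∉ A → ¬ G.Adj u v

/-- `G` is `(s, k)`-unbreakable: there is no vertex cut `(A, B)` of `G` of order `< k` with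
`|A| ≥ s` and `|B| ≥ s`. -/
def GraphUnbreakable (G : SimpleGraph V) (s k : ℕ) : Prop :=
  ¬ ∃ A B : Finset V, IsVertexCut G A B ∧ (A ∩ B).card < k ∧ s ≤ A.card ∧ s ≤ B.card

/-- `(T, bag)` is a tree decomposition of the graph `G`. -/
def IsTreeDecomp (G : SimpleGraph V) {W : Type} (T : SimpleGraph W)
    (bag : W → Finset V) : Prop :=
  T.IsTree ∧
  (∀ u v : V, G.Adj u v → ∃ t : W, u ∈ bag t ∧ v ∈ bag t) ∧
  (∀ v : V, (T.induce {t : W | v ∈ bag t}).Connected)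

/-!
Uniqueness: a tree edge on the path between two bags of size `≥ 2s` splits `G` along its adhesion,
of size `< k`, into two sides each containing one of these bags, which unbreakability forbids.

Existence: suppose every bag has fewer than `2s` vertices. By unbreakability at most one side of
each tree edge carries `≥ s` vertices; orient the edge towards it. A finite tree has a node `b`
without outgoing edge. Group the branches at `b` by their adhesion `A ⊆ bag b`. If the branches of
one group had `≥ s` vertices outside `bag b` in total, a subfamily would have between `s` and `2s`
of them, and together with `A` it would be one side of a cut of order `< k`. Hence
`|V| < 2s + (number of A) · s ≤ 2s + (2s)^k · s ≤ (2s)^(k+2)`.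
-/

namespace SimpleGraph

variable {W : Type*} {T : SimpleGraph W}

theorem Reachable.propagate {P : W → Prop} (hP : ∀ x y, T.Adj x y → P x → P y) {x y : W}
    (h : T.Reachable x y) (hx : P x) : P y := by
  obtain ⟨p⟩ := h
  induction p with
  | nil => exact hx
  | cons hab _ ih => exact ih (hP _ _ hab hx)

def edgeSide (T : SimpleGraph W) (a b : W) : Set W :=
  {w | (T.deleteEdges {s(a, b)}).Reachable b w}

variable {a b w x y : W}

theorem self_mem_edgeSide : b ∈ T.edgeSide a b := Reachable.refl b

theorem mem_edgeSide_of_adj (hxy : T.Adj x y) (hne : s(x, y) ≠ s(a, b))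
    (hx : x ∈ T.edgeSide a b) : y ∈ T.edgeSide a b :=
  Reachable.trans hx (Adj.reachable (deleteEdges_adj.mpr ⟨hxy, hne⟩))

theorem IsAcyclic.disjoint_edgeSide (hT : T.IsAcyclic) (hab : T.Adj a b) :
    Disjoint (T.edgeSide a b) (T.edgeSide b a) := by
  refine Set.disjoint_left.mpr fun w hb ha => isAcyclic_iff_forall_adj_isBridge.mp hT hab ?_
  change (T.deleteEdges {s(b, a)}).Reachable a w at ha
  rw [Sym2.eq_swap] at ha
  exact ha.trans hb.symm

theorem mem_edgeSide_or_of_mem_edgeSide_or (hxy : T.Adj x y)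
    (hx : x ∈ T.edgeSide a b ∨ x ∈ T.edgeSide b a) :
    y ∈ T.edgeSide a b ∨ y ∈ T.edgeSide b a := by
  by_cases he : s(x, y) = s(a, b)
  · rcases Sym2.eq_iff.mp he with ⟨-, rfl⟩ | ⟨-, rfl⟩
    exacts [Or.inl self_mem_edgeSide, Or.inr self_mem_edgeSide]
  · have he' : s(x, y) ≠ s(b, a) := Sym2.eq_swap (a := a) ▸ he
    exact hx.imp (mem_edgeSide_of_adj hxy he) (mem_edgeSide_of_adj hxy he')

theorem Connected.mem_edgeSide_or (hT : T.Connected) (a b w : W) :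
    w ∈ T.edgeSide a b ∨ w ∈ T.edgeSide b a :=
  (hT b w).propagate (fun _ _ => mem_edgeSide_or_of_mem_edgeSide_or) (Or.inl self_mem_edgeSide)

theorem IsTree.exists_adj_mem_edgeSide (hT : T.IsTree) (hbw : b ≠ w) :
    ∃ c, T.Adj b c ∧ w ∈ T.edgeSide b c := by
  classical
  obtain ⟨p, hp⟩ := (hT.connected b w).some.toPath
  cases p with
  | nil => exact absurd rfl hbw
  | @cons _ c _ hbc q =>
    have hb : b ∉ q.support := ((Walk.cons_isPath_iff hbc q).mp hp).2
    exact ⟨c, hbc, ⟨q.toDeleteEdge _ fun he => hb (q.fst_mem_support_of_mem_edges he)⟩⟩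

theorem IsAcyclic.mem_of_induce_connected (hT : T.IsAcyclic) (hab : T.Adj a b) {S : Set W}
    (hS : (T.induce S).Connected) (hx : x ∈ S) (hxa : x ∈ T.edgeSide b a) (hy : y ∈ S)
    (hyb : y ∈ T.edgeSide a b) : a ∈ S ∧ b ∈ S := by
  have hstep : ∀ z z' : S, (T.induce S).Adj z z' →
      z.1 ∈ T.edgeSide b a ∨ a ∈ S ∧ b ∈ S → z'.1 ∈ T.edgeSide b a ∨ a ∈ S ∧ b ∈ S := by
    rintro ⟨z, hz⟩ ⟨z', hz'⟩ hzz' (hside | hab)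
    · by_cases he : s(z, z') = s(b, a)
      · rcases Sym2.eq_iff.mp he with ⟨rfl, rfl⟩ | ⟨rfl, rfl⟩
        exacts [Or.inr ⟨hz', hz⟩, Or.inr ⟨hz, hz'⟩]
      · exact Or.inl (mem_edgeSide_of_adj hzz' he hside)
    · exact Or.inr hab
  refine ((hS ⟨x, hx⟩ ⟨y, hy⟩).propagate (P := fun z : S => z.1 ∈ T.edgeSide b a ∨ a ∈ S ∧ b ∈ S)
    hstep (Or.inl hxa)).resolve_left fun hya => ?_
  exact Set.disjoint_left.mp (hT.disjoint_edgeSide hab) hyb hya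

theorem IsTree.exists_forall_adj_not [Finite W] (hT : T.IsTree) {P : W → W → Prop}
    (hP : ∀ ⦃x y⦄, T.Adj x y → P x y → ¬ P y x) : ∃ b, ∀ c, T.Adj b c → ¬ P b c := by
  classical
  have := Fintype.ofFinite W
  -- otherwise an out-edge chosen at every node injects the nodes into the edges of the tree
  by_contra! h
  choose f hadj hf using h
  have hinj : Set.InjOn (fun x => s(x, f x)) (univ : Finset W) := by
    intro x _ y _ hxy
    rcases Sym2.eq_iff.mp hxy with ⟨h, -⟩ | ⟨hx, rfl⟩
    · exact h
    · have hback := hf (f x)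
      rw [← hx] at hback
      exact absurd hback (hP (hadj x) (hf x))
  have hcard := card_le_card_of_injOn _ (fun x _ => mem_edgeFinset.mpr (hadj x)) hinj
  have := hT.card_edgeFinset
  rw [card_univ] at hcard
  omega

end SimpleGraph

namespace Finset

variable {ι α : Type*} [DecidableEq α]

theorem exists_subset_le_card_biUnion_lt [DecidableEq ι] {F : Finset ι} {f : ι → Finset α}
    {s : ℕ} (hs : 0 < s) (hsmall : ∀ i ∈ F, #(f i) < s) (htot : s ≤ #(F.biUnion f)) :
    ∃ C ⊆ F, s ≤ #(C.biUnion f) ∧ #(C.biUnion f) < 2 * s := by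
  induction F using Finset.induction_on with
  | empty => simp only [biUnion_empty, card_empty] at htot; omega
  | insert i F hi ih =>
    by_cases hF : s ≤ #(F.biUnion f)
    · obtain ⟨C, hCF, hC⟩ := ih (fun j hj => hsmall j (mem_insert_of_mem hj)) hF
      exact ⟨C, hCF.trans (subset_insert i F), hC⟩
    · refine ⟨insert i F, Subset.rfl, htot, ?_⟩
      rw [biUnion_insert]
      have := card_union_le (f i) (F.biUnion f)
      have := hsmall i (mem_insert_self i F)
      omega

theorem card_filter_card_lt_le (B : Finset α) (k : ℕ) :
    #{A ∈ B.powerset | #A < k} ≤ (#B + 1) ^ k := by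
  have hsub : {A ∈ B.powerset | #A < k} ⊆ (range k).biUnion B.powersetCard := by
    intro A hA
    rw [mem_filter, mem_powerset] at hA
    exact mem_biUnion.mpr ⟨#A, mem_range.mpr hA.2, mem_powersetCard.mpr ⟨hA.1, rfl⟩⟩
  calc #{A ∈ B.powerset | #A < k}
      ≤ ∑ j ∈ range k, #(B.powersetCard j) := (card_le_card hsub).trans card_biUnion_le
    _ ≤ ∑ j ∈ range (k + 1), #B ^ j * 1 ^ (k - j) * k.choose j := by
        refine (sum_le_sum fun j hj => ?_).trans
          (sum_le_sum_of_subset (range_subset_range.mpr k.le_succ))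
        rw [card_powersetCard, one_pow, mul_one]
        exact (Nat.choose_le_pow _ _).trans
          (Nat.le_mul_of_pos_right _ (Nat.choose_pos (mem_range.mp hj).le))
    _ = (#B + 1) ^ k := (add_pow _ _ _).symm

end Finset

section Unbreakable

variable {G : SimpleGraph V} {s k : ℕ}

theorem GraphUnbreakable.card_lt_add_of_closed (hunb : GraphUnbreakable G s k)
    {U A : Finset V} (hA : #A < k) (hclosed : ∀ u ∈ U, ∀ v, G.Adj u v → v ∈ U ∨ v ∈ A)
    (hU : s ≤ #U) : Fintype.card V < #U + s := by
  by_contra! hV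
  refine hunb ⟨U ∪ A, univ \ U, ⟨?_, ?_⟩, ?_, hU.trans (card_le_card subset_union_left), ?_⟩
  · ext v
    by_cases v ∈ U <;> simp_all
  · intro u v _ hu hv hv' huv
    have hu : u ∈ U := by simpa using hu
    rcases hclosed u hu v huv with h | h <;> simp_all
  · refine (card_le_card fun v hv => ?_).trans_lt hA
    simp only [mem_inter, mem_union, mem_sdiff, mem_univ, true_and] at hv
    tauto
  · rw [card_sdiff_of_subset (subset_univ U), card_univ]
    omega

theorem GraphUnbreakable.card_biUnion_lt {ι : Type*} [DecidableEq ι]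
    (hunb : GraphUnbreakable G s k) (hs : 0 < s) (hV : 3 * s ≤ Fintype.card V)
    {F : Finset ι} {f : ι → Finset V} {A : Finset V} (hA : #A < k)
    (hsmall : ∀ i ∈ F, #(f i) < s)
    (hclosed : ∀ i ∈ F, ∀ u ∈ f i, ∀ v, G.Adj u v → v ∈ f i ∨ v ∈ A) :
    #(F.biUnion f) < s := by
  by_contra! htot
  obtain ⟨C, hCF, hCs, hC2s⟩ := exists_subset_le_card_biUnion_lt hs hsmall htot
  have hCclosed : ∀ u ∈ C.biUnion f, ∀ v, G.Adj u v → v ∈ C.biUnion f ∨ v ∈ A := by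
    intro u hu v huv
    obtain ⟨i, hi, hui⟩ := mem_biUnion.mp hu
    exact (hclosed i (hCF hi) u hui v huv).imp_left fun hv => mem_biUnion.mpr ⟨i, hi, hv⟩
  have := hunb.card_lt_add_of_closed hA hCclosed hCs
  omega

end Unbreakable

section TreeDecomp

variable {W : Type} {G : SimpleGraph V} {T : SimpleGraph W} {bag : W → Finset V}
  {s k : ℕ} {a b c t : W} {u v : V}

open Classical in
noncomputable def bagSide (T : SimpleGraph W) (bag : W → Finset V) (a b : W) : Finset V :=
  {v | ∃ w ∈ T.edgeSide a b, v ∈ bag w}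

omit [DecidableEq V] in
theorem mem_bagSide : v ∈ bagSide T bag a b ↔ ∃ w ∈ T.edgeSide a b, v ∈ bag w := by
  simp [bagSide]

omit [DecidableEq V] in
theorem bag_subset_bagSide (ht : t ∈ T.edgeSide a b) : bag t ⊆ bagSide T bag a b :=
  fun _ hv => mem_bagSide.mpr ⟨t, ht, hv⟩

namespace IsTreeDecomp

variable (hTD : IsTreeDecomp G T bag)
include hTD

omit [Fintype V] [DecidableEq V] in
theorem exists_mem_bag (v : V) : ∃ t, v ∈ bag t :=
  let ⟨⟨t, ht⟩⟩ := (hTD.2.2 v).nonempty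
  ⟨t, ht⟩

omit [Fintype V] in
theorem mem_inter_of_mem_edgeSide {t t' : W} (hab : T.Adj a b) (ht : t ∈ T.edgeSide b a)
    (hvt : v ∈ bag t) (ht' : t' ∈ T.edgeSide a b) (hvt' : v ∈ bag t') : v ∈ bag a ∩ bag b :=
  mem_inter.mpr (hTD.1.isAcyclic.mem_of_induce_connected hab (hTD.2.2 v) hvt ht hvt' ht')

theorem isVertexCut_bagSide (a b : W) :
    IsVertexCut G (bagSide T bag b a) (bagSide T bag a b) := by
  refine ⟨eq_univ_of_forall fun v => ?_, fun u v _ hu _ hv huv => ?_⟩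
  · obtain ⟨t, ht⟩ := hTD.exists_mem_bag v
    rcases hTD.1.connected.mem_edgeSide_or a b t with h | h
    exacts [mem_union_right _ (mem_bagSide.mpr ⟨t, h, ht⟩),
      mem_union_left _ (mem_bagSide.mpr ⟨t, h, ht⟩)]
  · obtain ⟨t, hut, hvt⟩ := hTD.2.1 u v huv
    rcases hTD.1.connected.mem_edgeSide_or a b t with h | h
    exacts [hu (mem_bagSide.mpr ⟨t, h, hut⟩), hv (mem_bagSide.mpr ⟨t, h, hvt⟩)]

theorem bagSide_inter_bagSide_subset (hab : T.Adj a b) :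
    bagSide T bag b a ∩ bagSide T bag a b ⊆ bag a ∩ bag b := by
  intro v hv
  obtain ⟨⟨t, ht, hvt⟩, ⟨t', ht', hvt'⟩⟩ := And.imp mem_bagSide.mp mem_bagSide.mp
    (mem_inter.mp hv)
  exact hTD.mem_inter_of_mem_edgeSide hab ht hvt ht' hvt'

theorem card_bagSide_lt (hunb : GraphUnbreakable G s k) (hab : T.Adj a b)
    (hadh : #(bag a ∩ bag b) < k) (h : s ≤ #(bagSide T bag a b)) :
    #(bagSide T bag b a) < s := by
  by_contra! h'
  exact hunb ⟨_, _, hTD.isVertexCut_bagSide a b,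
    (card_le_card (hTD.bagSide_inter_bagSide_subset hab)).trans_lt hadh, h', h⟩

theorem mem_bagSide_sdiff_or_mem_inter_of_adj (hbc : T.Adj b c)
    (hu : u ∈ bagSide T bag b c) (hub : u ∉ bag b) (huv : G.Adj u v) :
    v ∈ bagSide T bag b c \ bag b ∨ v ∈ bag b ∩ bag c := by
  obtain ⟨t, ht, hut⟩ := mem_bagSide.mp hu
  obtain ⟨t', hut', hvt'⟩ := hTD.2.1 u v huv
  rcases hTD.1.connected.mem_edgeSide_or b c t' with h | h
  · by_cases hvb : v ∈ bag b
    · exact Or.inr (hTD.mem_inter_of_mem_edgeSide hbc self_mem_edgeSide hvb h hvt')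
    · exact Or.inl (mem_sdiff.mpr ⟨mem_bagSide.mpr ⟨t', h, hvt'⟩, hvb⟩)
  · exact absurd (mem_inter.mp (hTD.mem_inter_of_mem_edgeSide hbc h hut' ht hut)).1 hub

theorem eq_of_two_mul_le_card_bag (hunb : GraphUnbreakable G s k)
    (hadh : ∀ a b : W, T.Adj a b → #(bag a ∩ bag b) < k) {t t' : W}
    (ht : 2 * s ≤ #(bag t)) (ht' : 2 * s ≤ #(bag t')) : t = t' := by
  by_contra hne
  obtain ⟨c, htc, ht'c⟩ := hTD.1.exists_adj_mem_edgeSide hne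
  have hside : s ≤ #(bagSide T bag t c) := by
    have : #(bag t') ≤ #(bagSide T bag t c) := card_le_card (bag_subset_bagSide ht'c)
    omega
  have hside' : s ≤ #(bagSide T bag c t) := by
    have : #(bag t) ≤ #(bagSide T bag c t) := card_le_card (bag_subset_bagSide self_mem_edgeSide)
    omega
  exact (hTD.card_bagSide_lt hunb htc (hadh t c htc) hside).not_ge hside'

theorem card_le_of_forall_card_bagSide_lt [Fintype W] (hunb : GraphUnbreakable G s k)
    (hadh : ∀ a b : W, T.Adj a b → #(bag a ∩ bag b) < k) (hs : 0 < s)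
    (hV : 3 * s ≤ Fintype.card V) (hb : ∀ c, T.Adj b c → #(bagSide T bag b c) < s) :
    Fintype.card V ≤ #(bag b) + #{A ∈ (bag b).powerset | #A < k} * s := by
  classical
  set small := {A ∈ (bag b).powerset | #A < k}
  let piece (c : W) : Finset V := bagSide T bag b c \ bag b
  let group (A : Finset V) : Finset W := {c | T.Adj b c ∧ bag b ∩ bag c = A}
  have hgroup : ∀ A ∈ small, #((group A).biUnion piece) < s := by
    intro A hA
    refine hunb.card_biUnion_lt hs hV (mem_filter.mp hA).2
      (fun c hc => (card_le_card sdiff_subset).trans_lt (hb c (mem_filter.mp hc).2.1)) ?_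
    intro c hc u hu v huv
    obtain ⟨-, hbc, rfl⟩ := mem_filter.mp hc
    exact hTD.mem_bagSide_sdiff_or_mem_inter_of_adj hbc (mem_sdiff.mp hu).1
      (mem_sdiff.mp hu).2 huv
  have hcover : univ ⊆ bag b ∪ small.biUnion fun A => (group A).biUnion piece := by
    intro v _
    obtain ⟨t, hvt⟩ := hTD.exists_mem_bag v
    by_cases hvb : v ∈ bag b
    · exact mem_union_left _ hvb
    have hbt : b ≠ t := by rintro rfl; exact hvb hvt
    obtain ⟨c, hbc, htc⟩ := hTD.1.exists_adj_mem_edgeSide hbt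
    refine mem_union_right _ (mem_biUnion.mpr ⟨bag b ∩ bag c, ?_, mem_biUnion.mpr ⟨c, ?_, ?_⟩⟩)
    · exact mem_filter.mpr ⟨mem_powerset.mpr inter_subset_left, hadh b c hbc⟩
    · exact mem_filter.mpr ⟨mem_univ c, hbc, rfl⟩
    · exact mem_sdiff.mpr ⟨mem_bagSide.mpr ⟨t, htc, hvt⟩, hvb⟩
  calc Fintype.card V ≤ #(bag b ∪ small.biUnion fun A => (group A).biUnion piece) :=
        card_univ (α := V) ▸ card_le_card hcover
    _ ≤ #(bag b) + ∑ A ∈ small, #((group A).biUnion piece) :=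
        (card_union_le _ _).trans (Nat.add_le_add_left card_biUnion_le _)
    _ ≤ #(bag b) + #small * s := by
        gcongr
        simpa using sum_le_card_nsmul small _ s fun A hA => (hgroup A hA).le

theorem exists_two_mul_le_card_bag [Fintype W] (hunb : GraphUnbreakable G s k)
    (hadh : ∀ a b : W, T.Adj a b → #(bag a ∩ bag b) < k)
    (hV : (2 * s) ^ (k + 2) ≤ Fintype.card V) : ∃ t, 2 * s ≤ #(bag t) := by
  by_contra! hsmall
  obtain ⟨t₀⟩ := hTD.1.connected.nonempty
  have hs : 0 < s := by have := hsmall t₀; omega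
  obtain ⟨b, hb⟩ := hTD.1.exists_forall_adj_not (P := fun x y => s ≤ #(bagSide T bag x y))
    fun x y hxy h => (hTD.card_bagSide_lt hunb hxy (hadh x y hxy) h).not_ge
  push Not at hb
  have hpow : (2 * s) ^ (k + 2) = (2 * s) ^ k * (4 * s * s) := by ring
  have hsubsets : #{A ∈ (bag b).powerset | #A < k} ≤ (2 * s) ^ k :=
    (card_filter_card_lt_le _ _).trans (Nat.pow_le_pow_left (hsmall b) k)
  have hP : 1 ≤ (2 * s) ^ k := Nat.one_le_pow _ _ (by omega)
  rw [hpow] at hV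
  generalize (2 * s) ^ k = P at hV hP hsubsets
  have h3s : 3 * s ≤ Fintype.card V := by nlinarith [Nat.mul_le_mul_right (4 * s * s) hP]
  have hcount := hTD.card_le_of_forall_card_bagSide_lt hunb hadh hs h3s hb
  have := hsmall b
  nlinarith [Nat.mul_le_mul_right s hsubsets, Nat.mul_le_mul_right (4 * s * s) hP]

end IsTreeDecomp

end TreeDecomp

theorem unique_big_bag_general {W : Type} [Fintype W] (G : SimpleGraph V) (s k : ℕ)
    (hunb : GraphUnbreakable G s k)
    (hV : (2 * s) ^ (k + 2) ≤ Fintype.card V)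
    (T : SimpleGraph W) (bag : W → Finset V)
    (hTD : IsTreeDecomp G T bag)
    (hadh : ∀ a b : W, T.Adj a b → (bag a ∩ bag b).card < k) :
    ∃! t : W, 2 * s ≤ (bag t).card := by
  obtain ⟨t, ht⟩ := hTD.exists_two_mul_le_card_bag hunb hadh hV
  exact ⟨t, ht, fun t' ht' => hTD.eq_of_two_mul_le_card_bag hunb hadh ht' ht⟩

/-- Let `s ≥ k ≥ 1` and let `G` be an `(s,k)`-unbreakable graph with at least `(2s)^(k+2)`
vertices. Then every tree decomposition of `G` all of whose adhesions have size `< k` has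
exactly one bag of size at least `2s`. -/
theorem unique_big_bag {W : Type} [Fintype W] (G : SimpleGraph V) (s k : ℕ)
    (hk : 1 ≤ k) (hsk : k ≤ s)
    (hunb : GraphUnbreakable G s k)
    (hV : (2 * s) ^ (k + 2) ≤ Fintype.card V)
    (T : SimpleGraph W) (bag : W → Finset V)
    (hTD : IsTreeDecomp G T bag)
    (hadh : ∀ a b : W, T.Adj a b → (bag a ∩ bag b).card < k) :
    ∃! t : W, 2 * s ≤ (bag t).card :=
  unique_big_bag_general G s k hunb hV T bag hTD hadh
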